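/- Assume product-form coefficients with each b_n(q) → ∞ and regular variation (RV): there exists H ∈ (0,1)^d with lim_{n→∞} b_{⌊s n⌋}(q)² / b_n(q)² = s^{2H_q} for every s∈[0,1] and q = 1,…,d. Fix m∈ℕ, t^{(1)},…,t^{(m)} ∈ [0,1]^d, and λ_1,…,λ_m ∈ ℝ, and set n^{(r)} = (⌊n_1 t^{(r)}_1⌋,…,⌊n_d t^{(r)}_d⌋) and b̃_n² = ∑_{j∈ℤ^d} (∑_{r=1}^m λ_r b_{n^{(r)},j})². Then lim_{n→∞} b̃_n² / b_n² = ∑_{r=1}^m ∑_{s=1}^m λ_r λ_s ∏_{q=1}^d ½ [ (t^{(r)}_q)^{2H_q} + (t^{(s)}_q)^{2H_q} − |t^{(r)}_q − t^{(s)}_q|^{2H_q} ]. -/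

import Mathlib

/-!
For product-form coefficients `b_{n,j} = ∏_q b_{n,j}(q)`, so after expanding the square `b̃_n²`
is a finite combination of products over `q` of inner products `⟨b_{k,·}(q), b_{l,·}(q)⟩` in
`ℓ²(ℤ)`. For `k ≤ l` the difference `b_{l,·}(q) - b_{k,·}(q)` is a translate of `b_{l-k,·}(q)`,
so polarization gives `⟨b_{k,·}(q), b_{l,·}(q)⟩ = (b_k(q)² + b_l(q)² - b_{l-k}(q)²) / 2`. For
`k = ⌊t n_q⌋`, `l = ⌊s n_q⌋`, after division by `b_n(q)²` regular variation sends the three terms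
to `t^{2H_q}`, `s^{2H_q}` and `|t - s|^{2H_q}`.
-/

open MeasureTheory ProbabilityTheory Filter Topology BoundedContinuousFunction
open scoped ENNReal NNReal BigOperators

/-- Product-form coefficients `a_i = ∏_{q=1}^d a_{i_q}(q)`. -/
def prodCoef {d : ℕ} (aq : Fin d → ℤ → ℝ) (i : Fin d → ℤ) : ℝ :=
  ∏ q : Fin d, aq q (i q)

/-- The rectangle `Λ_n = {1,…,n_1} × ⋯ × {1,…,n_d} ⊂ ℤ^d`. -/
noncomputable def Lambda (d : ℕ) (n : Fin d → ℕ) : Finset (Fin d → ℤ) :=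
  Fintype.piFinset fun q => Finset.Icc 1 (n q : ℤ)

/-- `b_{n,j} = ∑_{i ∈ Λ_n} a_{i-j}` for product-form coefficients. -/
noncomputable def bProd {d : ℕ} (aq : Fin d → ℤ → ℝ) (n : Fin d → ℕ) (j : Fin d → ℤ) : ℝ :=
  ∑ i ∈ Lambda d n, prodCoef aq (i - j)

/-- One-dimensional coefficients `b_{n,j}(q) = ∑_{i=1}^{n_q} a_{i-j_q}(q)`. -/
noncomputable def b1 (a : ℤ → ℝ) (nq : ℕ) (jq : ℤ) : ℝ :=
  ∑ i ∈ Finset.Icc (1 : ℤ) (nq : ℤ), a (i - jq)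

/-- `b_n(q) = (∑_{j_q ∈ ℤ} b_{n,j}(q)²)^{1/2}`. -/
noncomputable def b1norm (a : ℤ → ℝ) (nq : ℕ) : ℝ :=
  Real.sqrt (∑' j : ℤ, (b1 a nq j) ^ 2)

/-- Regular variation (RV) of the one-dimensional norms along `N` with exponent `Hq`:
`b_{⌊sn⌋}(q)²/b_n(q)² → s^{2 H_q}` for every `s ∈ [0,1]`. -/
def RegVary (a : ℤ → ℝ) (N : ℕ → ℕ) (Hq : ℝ) : Prop :=
  ∀ s : ℝ, s ∈ Set.Icc (0 : ℝ) 1 →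
    Filter.Tendsto (fun n => (b1norm a (⌊s * (N n : ℝ)⌋₊)) ^ 2 / (b1norm a (N n)) ^ 2)
      Filter.atTop (nhds (s ^ (2 * Hq)))

/-- The fractional-Brownian covariance kernel `½(t^{2H} + s^{2H} - |t-s|^{2H})`. -/
noncomputable def hurstCov (H t s : ℝ) : ℝ :=
  (t ^ (2 * H) + s ^ (2 * H) - |t - s| ^ (2 * H)) / 2

open scoped RealInnerProductSpace

lemma Nat.floor_add_floor_le_floor_add {a b : ℝ} (ha : 0 ≤ a) (hb : 0 ≤ b) :
    ⌊a⌋₊ + ⌊b⌋₊ ≤ ⌊a + b⌋₊ := by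
  have := Int.le_floor_add a b
  rw [← Int.natCast_floor_eq_floor ha, ← Int.natCast_floor_eq_floor hb,
    ← Int.natCast_floor_eq_floor (add_nonneg ha hb)] at this
  omega

lemma Nat.floor_add_le_floor_add_floor_add_one {a b : ℝ} (ha : 0 ≤ a) (hb : 0 ≤ b) :
    ⌊a + b⌋₊ ≤ ⌊a⌋₊ + ⌊b⌋₊ + 1 := by
  have := Int.le_floor_add_floor a b
  rw [← Int.natCast_floor_eq_floor ha, ← Int.natCast_floor_eq_floor hb,
    ← Int.natCast_floor_eq_floor (add_nonneg ha hb)] at this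
  omega

lemma Filter.Tendsto.sq_div_sq_of_abs_sub_le {α : Type*} {l : Filter α} [l.NeBot] {x y z : α → ℝ}
    {C L : ℝ} (h : Tendsto (fun n => x n ^ 2 / y n ^ 2) l (𝓝 L)) (hy : Tendsto y l atTop)
    (hzx : ∀ n, |z n - x n| ≤ C) :
    Tendsto (fun n => z n ^ 2 / y n ^ 2) l (𝓝 L) := by
  have hL : 0 ≤ L := ge_of_tendsto' h fun n => by positivity
  have hx : Tendsto (fun n => |x n / y n|) l (𝓝 √L) := by
    simpa only [Function.comp_def, ← div_pow, Real.sqrt_sq_eq_abs] using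
      (Real.continuous_sqrt.tendsto L).comp h
  have hbound : Tendsto (fun n => C * |y n|⁻¹) l (𝓝 0) := by
    simpa using hy.inv_tendsto_atTop.abs.const_mul C
  have hzx' : Tendsto (fun n => |z n / y n| - |x n / y n|) l (𝓝 0) := by
    refine squeeze_zero_norm (fun n => ?_) hbound
    calc ‖|z n / y n| - |x n / y n|‖ ≤ |z n / y n - x n / y n| := abs_abs_sub_abs_le_abs_sub _ _
      _ = |z n - x n| * |y n|⁻¹ := by rw [← sub_div, abs_div, div_eq_mul_inv]
      _ ≤ C * |y n|⁻¹ := by gcongr; exact hzx n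
  have hz : Tendsto (fun n => |z n / y n|) l (𝓝 √L) := by
    simpa using hx.add hzx'
  simpa only [sq_abs, div_pow, Real.sq_sqrt hL] using hz.pow 2

section ProductSums

variable {ι R : Type*} [NormedCommRing R]

lemma summable_norm_prod_pi : ∀ {d : ℕ} (f : Fin d → ι → R),
    (∀ q, Summable fun x => ‖f q x‖) → Summable fun j : Fin d → ι => ‖∏ q, f q (j q)‖
  | 0, f, _ => (hasSum_fintype _).summable
  | d + 1, f, hf => by
    refine (Fin.consEquiv fun _ => ι).summable_iff.mp ?_
    refine Summable.of_nonneg_of_le (fun _ => norm_nonneg _) (fun p => ?_)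
      ((hf 0).mul_norm (summable_norm_prod_pi (fun q => f q.succ) fun q => hf q.succ))
    simp [Fin.consEquiv, Fin.prod_univ_succ]

variable [CompleteSpace R]

lemma tsum_prod_pi : ∀ {d : ℕ} (f : Fin d → ι → R),
    (∀ q, Summable fun x => ‖f q x‖) → ∑' j : Fin d → ι, ∏ q, f q (j q) = ∏ q, ∑' x, f q x
  | 0, f, _ => by simp
  | d + 1, f, hf => by
    rw [← (Fin.consEquiv fun _ => ι).tsum_eq, Fin.prod_univ_succ,
      ← tsum_prod_pi (fun q => f q.succ) (fun q => hf q.succ),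
      tsum_mul_tsum_of_summable_norm (hf 0)
        (summable_norm_prod_pi (fun q => f q.succ) fun q => hf q.succ)]
    simp [Fin.consEquiv, Fin.prod_univ_succ]

lemma hasSum_prod_pi {d : ℕ} (f : Fin d → ι → R) (hf : ∀ q, Summable fun x => ‖f q x‖) :
    HasSum (fun j : Fin d → ι => ∏ q, f q (j q)) (∏ q, ∑' x, f q x) :=
  tsum_prod_pi f hf ▸ (summable_norm_prod_pi f hf).of_norm.hasSum

end ProductSums

lemma lp.real_inner_eq_tsum_mul {ι : Type*} (f g : lp (fun _ : ι => ℝ) 2) :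
    ⟪f, g⟫ = ∑' j, f j * g j := by
  simp [lp.inner_eq_tsum, mul_comm]

lemma lp.norm_eq_sqrt_tsum_sq {ι : Type*} (f : lp (fun _ : ι => ℝ) 2) :
    ‖f‖ = √(∑' j, f j ^ 2) := by
  simp only [sq, ← lp.real_inner_eq_tsum_mul, real_inner_self_eq_norm_mul_norm,
    Real.sqrt_mul_self (norm_nonneg f)]

section OneDimensional

variable (a : ℤ → ℝ)

lemma b1_succ (n : ℕ) (j : ℤ) : b1 a (n + 1) j = b1 a n j + a (n + 1 - j) := by
  rw [b1, b1, Nat.cast_succ, ← Finset.insert_Icc_right_eq_Icc_add_one (by omega),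
    Finset.sum_insert (by simp), add_comm]

lemma b1_add (m k : ℕ) (j : ℤ) : b1 a (m + k) j = b1 a m j + b1 a k (j - m) := by
  induction k with
  | zero => simp [b1]
  | succ k ih => rw [← add_assoc, b1_succ, b1_succ, ih]; push_cast; ring_nf

lemma b1norm_nonneg (n : ℕ) : 0 ≤ b1norm a n := Real.sqrt_nonneg _

variable {a} (ha : Summable fun i => a i ^ 2)
include ha

lemma memℓp_b1 (n : ℕ) : Memℓp (b1 a n) 2 := by
  have hshift (i : ℤ) : Memℓp (fun j => a (i - j)) 2 := by
    refine memℓp_gen ?_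
    simpa [Real.norm_eq_abs, Function.comp_def] using (Equiv.subLeft i).summable_iff.2 ha
  exact Memℓp.finsetSum _ fun i _ => hshift i

noncomputable def b1Vec (n : ℕ) : lp (fun _ : ℤ => ℝ) 2 := ⟨b1 a n, memℓp_b1 ha n⟩

lemma b1norm_eq_norm_b1Vec (n : ℕ) : b1norm a n = ‖b1Vec ha n‖ := by
  rw [lp.norm_eq_sqrt_tsum_sq]; rfl

lemma norm_b1Vec_add_sub (m k : ℕ) : ‖b1Vec ha (m + k) - b1Vec ha m‖ = b1norm a k := by
  rw [lp.norm_eq_sqrt_tsum_sq, b1norm, ← (Equiv.addRight (m : ℤ)).tsum_eq]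
  congr 1
  refine tsum_congr fun j => ?_
  change (b1 a (m + k) (j + m) - b1 a m (j + m)) ^ 2 = _
  rw [b1_add, add_sub_cancel_left, add_sub_cancel_right]

lemma abs_b1norm_add_sub_le (m k : ℕ) : |b1norm a (m + k) - b1norm a m| ≤ b1norm a k := by
  simpa only [b1norm_eq_norm_b1Vec ha, norm_b1Vec_add_sub] using
    abs_norm_sub_norm_le (b1Vec ha (m + k)) (b1Vec ha m)

lemma abs_b1norm_sub_le_of_le_add_one {m n : ℕ} (hmn : m ≤ n) (hnm : n ≤ m + 1) :
    |b1norm a n - b1norm a m| ≤ b1norm a 1 := by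
  obtain rfl | rfl := Nat.le_and_le_add_one_iff.mp ⟨hmn, hnm⟩
  · simpa using b1norm_nonneg a 1
  · exact abs_b1norm_add_sub_le ha m 1

lemma inner_b1Vec_of_le {m n : ℕ} (h : m ≤ n) :
    ⟪b1Vec ha m, b1Vec ha n⟫ = (b1norm a m ^ 2 + b1norm a n ^ 2 - b1norm a (n - m) ^ 2) / 2 := by
  obtain ⟨k, rfl⟩ := Nat.exists_eq_add_of_le h
  have hpolar := norm_sub_sq_real (b1Vec ha (m + k)) (b1Vec ha m)
  rw [norm_b1Vec_add_sub, real_inner_comm] at hpolar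
  rw [b1norm_eq_norm_b1Vec ha m, b1norm_eq_norm_b1Vec ha (m + k), Nat.add_sub_cancel_left]
  linarith

end OneDimensional

lemma hurstCov_comm (H t s : ℝ) : hurstCov H t s = hurstCov H s t := by
  rw [hurstCov, hurstCov, abs_sub_comm, add_comm (t ^ _)]

section Limit

variable {a : ℤ → ℝ} (ha : Summable fun i => a i ^ 2) {N : ℕ → ℕ}
  (hb : Tendsto (fun n => b1norm a (N n)) atTop atTop) {H : ℝ} (hRV : RegVary a N H)
include ha hb hRV

/-- The index `⌊s N⌋ - ⌊t N⌋` is `⌊(s - t) N⌋` up to one, and a shift of the index by one moves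
`b1norm` by at most `b1norm a 1`, which is negligible against `b1norm a (N n) → ∞`. -/
lemma tendsto_b1norm_floor_sub_floor {t s : ℝ} (ht : t ∈ Set.Icc (0 : ℝ) 1)
    (hs : s ∈ Set.Icc (0 : ℝ) 1) (hts : t ≤ s) :
    Tendsto (fun n => b1norm a (⌊s * N n⌋₊ - ⌊t * N n⌋₊) ^ 2 / b1norm a (N n) ^ 2) atTop
      (𝓝 ((s - t) ^ (2 * H))) := by
  have hfloor (n : ℕ) : ⌊(s - t) * N n⌋₊ ≤ ⌊s * N n⌋₊ - ⌊t * N n⌋₊ ∧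
      ⌊s * N n⌋₊ - ⌊t * N n⌋₊ ≤ ⌊(s - t) * N n⌋₊ + 1 := by
    have hN : (0 : ℝ) ≤ N n := Nat.cast_nonneg _
    have hsplit : s * N n = t * N n + (s - t) * N n := by ring
    have hlow := Nat.floor_add_floor_le_floor_add (mul_nonneg ht.1 hN)
      (mul_nonneg (sub_nonneg.2 hts) hN)
    have hup := Nat.floor_add_le_floor_add_floor_add_one (mul_nonneg ht.1 hN)
      (mul_nonneg (sub_nonneg.2 hts) hN)
    rw [← hsplit] at hlow hup
    omega
  exact (hRV (s - t) ⟨sub_nonneg.2 hts, by linarith [ht.1, hs.2]⟩).sq_div_sq_of_abs_sub_le hb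
    fun n => abs_b1norm_sub_le_of_le_add_one ha (hfloor n).1 (hfloor n).2

lemma tendsto_inner_b1Vec_floor_of_le {t s : ℝ} (ht : t ∈ Set.Icc (0 : ℝ) 1)
    (hs : s ∈ Set.Icc (0 : ℝ) 1) (hts : t ≤ s) :
    Tendsto (fun n => ⟪b1Vec ha ⌊t * N n⌋₊, b1Vec ha ⌊s * N n⌋₊⟫ / b1norm a (N n) ^ 2) atTop
      (𝓝 (hurstCov H t s)) := by
  have hlim := (((hRV t ht).add (hRV s hs)).sub
    (tendsto_b1norm_floor_sub_floor ha hb hRV ht hs hts)).div_const 2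
  rw [hurstCov, abs_sub_comm, abs_of_nonneg (sub_nonneg.2 hts)]
  refine hlim.congr fun n => ?_
  have hfloor : ⌊t * N n⌋₊ ≤ ⌊s * N n⌋₊ :=
    Nat.floor_mono (mul_le_mul_of_nonneg_right hts (Nat.cast_nonneg _))
  rw [inner_b1Vec_of_le ha hfloor]
  ring

lemma tendsto_inner_b1Vec_floor {t s : ℝ} (ht : t ∈ Set.Icc (0 : ℝ) 1)
    (hs : s ∈ Set.Icc (0 : ℝ) 1) :
    Tendsto (fun n => ⟪b1Vec ha ⌊t * N n⌋₊, b1Vec ha ⌊s * N n⌋₊⟫ / b1norm a (N n) ^ 2) atTop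
      (𝓝 (hurstCov H t s)) := by
  rcases le_total t s with hts | hst
  · exact tendsto_inner_b1Vec_floor_of_le ha hb hRV ht hs hts
  · simpa only [real_inner_comm, hurstCov_comm H s t] using
      tendsto_inner_b1Vec_floor_of_le ha hb hRV hs ht hst

end Limit

lemma bProd_eq_prod_b1 {d : ℕ} (aq : Fin d → ℤ → ℝ) (n : Fin d → ℕ) (j : Fin d → ℤ) :
    bProd aq n j = ∏ q, b1 (aq q) (n q) (j q) := by
  rw [bProd, Lambda]
  exact (Finset.prod_univ_sum (fun q => Finset.Icc 1 (n q : ℤ)) fun q i => aq q (i - j q)).symm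

lemma lp.summable_norm_mul_two {ι : Type*} (f g : lp (fun _ : ι => ℝ) 2) :
    Summable fun j => ‖f j * g j‖ := by
  simpa only [norm_mul] using lp.summable_mul (by rw [Real.holderConjugate_iff]; norm_num) f g

lemma tsum_sq_sum_bProd {d m : ℕ} (aq : Fin d → ℤ → ℝ)
    (hsq : ∀ q, Summable fun i : ℤ => aq q i ^ 2) (lam : Fin m → ℝ) (k : Fin m → Fin d → ℕ) :
    ∑' j : Fin d → ℤ, (∑ r, lam r * bProd aq (k r) j) ^ 2 =
      ∑ r, ∑ s, lam r * lam s * ∏ q, ⟪b1Vec (hsq q) (k r q), b1Vec (hsq q) (k s q)⟫ := by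
  have hprod (r s : Fin m) : HasSum
      (fun j : Fin d → ℤ => ∏ q, b1 (aq q) (k r q) (j q) * b1 (aq q) (k s q) (j q))
      (∏ q, ⟪b1Vec (hsq q) (k r q), b1Vec (hsq q) (k s q)⟫) := by
    simp only [lp.real_inner_eq_tsum_mul]
    exact hasSum_prod_pi (fun q x => b1Vec (hsq q) (k r q) x * b1Vec (hsq q) (k s q) x)
        fun q => lp.summable_norm_mul_two _ _
  rw [← (hasSum_sum fun r _ => hasSum_sum fun s _ => (hprod r s).mul_left (lam r * lam s)).tsum_eq]
  refine tsum_congr fun j => ?_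
  simp only [sq, Finset.sum_mul_sum, bProd_eq_prod_b1]
  refine Finset.sum_congr rfl fun r _ => Finset.sum_congr rfl fun s _ => ?_
  rw [Finset.prod_mul_distrib]
  ring

theorem btilde_norm_limit_general
    (d : ℕ)
    (aq : Fin d → ℤ → ℝ) (hsq : ∀ q, Summable fun i : ℤ => (aq q i) ^ 2)
    (N : ℕ → Fin d → ℕ)
    (hbq : ∀ q, Filter.Tendsto (fun n => b1norm (aq q) (N n q)) Filter.atTop Filter.atTop)
    (H : Fin d → ℝ)
    (hRV : ∀ q, RegVary (aq q) (fun n => N n q) (H q))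
    (m : ℕ) (t : Fin m → Fin d → ℝ) (ht : ∀ r q, t r q ∈ Set.Icc (0 : ℝ) 1)
    (lam : Fin m → ℝ) :
    Filter.Tendsto
      (fun n =>
        (∑' j : Fin d → ℤ,
          (∑ r : Fin m, lam r * bProd aq (fun q => ⌊t r q * (N n q : ℝ)⌋₊) j) ^ 2) /
          (∏ q : Fin d, b1norm (aq q) (N n q)) ^ 2)
      Filter.atTop
      (nhds (∑ r : Fin m, ∑ s : Fin m,
        lam r * lam s * ∏ q : Fin d, hurstCov (H q) (t r q) (t s q))) := by
  have hlim := tendsto_finsetSum Finset.univ fun r _ => tendsto_finsetSum Finset.univ fun s _ =>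
    (tendsto_finsetProd Finset.univ fun q _ => tendsto_inner_b1Vec_floor (hsq q) (hbq q) (hRV q)
      (ht r q) (ht s q)).const_mul (lam r * lam s)
  refine hlim.congr fun n => ?_
  simp only [tsum_sq_sum_bProd aq hsq, ← Finset.prod_pow, Finset.sum_div, Finset.prod_div_distrib,
    mul_div_assoc]

/-- under regular variation (RV), for fixed `t^{(1)},…,t^{(m)}` and
`λ_1,…,λ_m`, the normalized squared norm `b̃_n²/b_n²` of the linear combination of
coefficients converges to the fractional-Brownian-sheet variance of `∑ λ_r 𝔹^H(t^{(r)})`. -/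
theorem btilde_norm_limit
    (d : ℕ) (hd : 1 ≤ d)
    (aq : Fin d → ℤ → ℝ) (hsq : ∀ q, Summable fun i : ℤ => (aq q i) ^ 2)
    (N : ℕ → Fin d → ℕ) (hN : ∀ q, Filter.Tendsto (fun n => N n q) Filter.atTop Filter.atTop)
    (hbq : ∀ q, Filter.Tendsto (fun n => b1norm (aq q) (N n q)) Filter.atTop Filter.atTop)
    (H : Fin d → ℝ) (hH : ∀ q, H q ∈ Set.Ioo (0 : ℝ) 1)
    (hRV : ∀ q, RegVary (aq q) (fun n => N n q) (H q))
    (m : ℕ) (t : Fin m → Fin d → ℝ) (ht : ∀ r q, t r q ∈ Set.Icc (0 : ℝ) 1)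
    (lam : Fin m → ℝ) :
    Filter.Tendsto
      (fun n =>
        (∑' j : Fin d → ℤ,
          (∑ r : Fin m, lam r * bProd aq (fun q => ⌊t r q * (N n q : ℝ)⌋₊) j) ^ 2) /
          (∏ q : Fin d, b1norm (aq q) (N n q)) ^ 2)
      Filter.atTop
      (nhds (∑ r : Fin m, ∑ s : Fin m,
        lam r * lam s * ∏ q : Fin d, hurstCov (H q) (t r q) (t s q))) :=
  btilde_norm_limit_general d aq hsq N hbq H hRV m t ht lam
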